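/- arXiv:1402.3135 — 4 statements merged into one kernel-verified Lean document; each statement's English description precedes it below -/
import Mathlib

section
/- Let $(X,T)$ be a minimal flow with $T$ abelian and $d \geq 1$. Let $Q^{[d]}$ be the closure of the $\mathcal{G}_d$-orbit of the diagonal $\Delta^{[d]} = \{x^{[d]} : x \in X\}$ in $X^{[d]}$, where $\mathcal{G}_d$ is the group generated by the face action of $T^d$ and the diagonal $T$-action. Then the flow $(Q^{[d]}, \mathcal{G}_d)$ is minimal. -/
/-- The face action of `T^d` on `X^{2^d}`. -/
def faceAct {T X : Type*} [CommGroup T] [MulAction T X] (d : ℕ)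
    (t : Fin d → T) (x : Finset (Fin d) → X) : Finset (Fin d) → X :=
  fun ε => (∏ i ∈ ε, t i) • x ε

/-- `Q^{[d]}`: the closure of the face-group orbits of the diagonal points
(equivalently, of the `𝒢_d`-orbit of the diagonal). -/
def Qcube (T X : Type*) [CommGroup T] [MulAction T X] [TopologicalSpace X] (d : ℕ) :
    Set (Finset (Fin d) → X) :=
  closure {y | ∃ (x : X) (t : Fin d → T), y = faceAct d t fun _ => x}

/-!
Let `u` be a minimal idempotent of the enveloping semigroup `E` of `(X, T)` and let `x` be a
point with `u x = x`. Every idempotent of the enveloping semigroup `S` of `(X^{[d]}, 𝒢_d)`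
lying below `u^{[d]}` has all its coordinates in `E` below `u`, hence equals `u^{[d]}`; so
`u^{[d]}` lies in a minimal left ideal `L` of `S`. As `X` is minimal, `Q^{[d]} = S x^{[d]}`.
If `y = p x^{[d]}` with `p ∈ S`, then `p u^{[d]} ∈ L = S (p u^{[d]})` gives `r ∈ S` with
`r p u^{[d]} = u^{[d]}`, whence `r y = x^{[d]}` and `S y = S x^{[d]} = Q^{[d]}`.
-/

section MinimalIdeals

variable {M : Type*} [Semigroup M]

structure IsClosedLeftIdeal [TopologicalSpace M] (S : Subsemigroup M) (A : Set M) : Prop where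
  nonempty : A.Nonempty
  isClosed : IsClosed A
  mul_mem : ∀ p ∈ S, ∀ q ∈ A, p * q ∈ A

/-- Equivalent to minimality among the left ideals of `S`. -/
structure IsMinimalLeftIdeal (S : Subsemigroup M) (L : Set M) : Prop where
  nonempty : L.Nonempty
  subset : L ⊆ S
  image_mul_right_eq : ∀ q ∈ L, (· * q) '' S = L

structure IsMinimalIdempotent (S : Subsemigroup M) (e : M) : Prop where
  mem : e ∈ S
  mul_self : e * e = e
  eq_of_le : ∀ w ∈ S, w * w = w → w * e = w → e * w = w → w = e

variable {S : Subsemigroup M} {L : Set M}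

theorem IsMinimalLeftIdeal.mul_mem (hL : IsMinimalLeftIdeal S L) {p q : M} (hp : p ∈ S)
    (hq : q ∈ L) : p * q ∈ L := by
  rw [← hL.image_mul_right_eq q hq]
  exact ⟨p, hp, rfl⟩

theorem IsMinimalLeftIdeal.isMinimalIdempotent (hL : IsMinimalLeftIdeal S L) {e : M}
    (heL : e ∈ L) (he : e * e = e) : IsMinimalIdempotent S e := by
  refine ⟨hL.subset heL, he, fun w hw hww hwe hew => ?_⟩
  have hwL : w ∈ L := hwe ▸ hL.mul_mem hw heL
  obtain ⟨p, -, hpw⟩ : e ∈ (· * w) '' S := by rw [hL.image_mul_right_eq w hwL]; exact heL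
  calc w = e * w := hew.symm
    _ = e := by rw [← hpw, mul_assoc, hww]

theorem IsMinimalLeftIdeal.image_smul_eq {M Y : Type*} [Monoid M] [MulAction M Y]
    {S : Subsemigroup M} {L : Set M} (hL : IsMinimalLeftIdeal S L) {e : M} (he : e ∈ L)
    {z : Y} (hz : e • z = z) {p : M} (hp : p ∈ S) :
    (· • (p • z)) '' (S : Set M) = (· • z) '' (S : Set M) := by
  obtain ⟨r, hr, hrpe⟩ : e ∈ (· * (p * e)) '' S := by
    rw [hL.image_mul_right_eq _ (hL.mul_mem hp he)]; exact he
  have hrpz : r • p • z = z := by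
    conv_rhs => rw [← hz, ← hrpe]
    simp only [mul_smul, hz]
  refine Set.Subset.antisymm ?_ ?_
  · rintro _ ⟨q, hq, rfl⟩
    exact ⟨q * p, S.mul_mem hq hp, mul_smul q p z⟩
  · rintro _ ⟨q, hq, rfl⟩
    exact ⟨q * r, S.mul_mem hq hr, by simp only [mul_smul, hrpz]⟩

theorem IsMinimalIdempotent.const {ι N : Type*} [Semigroup N] {S : Subsemigroup (ι → N)}
    {E : Subsemigroup N} (hSE : ∀ w ∈ S, ∀ i, w i ∈ E) {u : N} (hu : IsMinimalIdempotent E u)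
    (huS : (fun _ => u) ∈ S) : IsMinimalIdempotent S (fun _ => u) := by
  refine ⟨huS, funext fun _ => hu.mul_self, fun w hw hww hwu huw => funext fun i => ?_⟩
  exact hu.eq_of_le (w i) (hSE w hw i) (congrFun hww i) (congrFun hwu i) (congrFun huw i)

variable [TopologicalSpace M] [CompactSpace M]

theorem IsClosedLeftIdeal.sInter_of_isChain {c : Set (Set M)} (hc : IsChain (· ⊆ ·) c)
    (hne : c.Nonempty) (hcS : ∀ A ∈ c, IsClosedLeftIdeal S A) :
    IsClosedLeftIdeal S (⋂₀ c) := by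
  refine ⟨?_, isClosed_sInter fun A hA => (hcS A hA).isClosed, fun p hp q hq => ?_⟩
  · have : Nonempty c := hne.coe_sort
    rw [Set.sInter_eq_iInter]
    exact IsCompact.nonempty_iInter_of_directed_nonempty_isCompact_isClosed _
      (DirectedOn.directed_val (IsChain.directedOn hc.symm)) (fun A => (hcS A A.2).nonempty)
      (fun A => (hcS A A.2).isClosed.isCompact) (fun A => (hcS A A.2).isClosed)
  · exact Set.mem_sInter.2 fun A hA => (hcS A hA).mul_mem p hp q (Set.mem_sInter.1 hq A hA)

variable [T2Space M]

theorem isClosedLeftIdeal_image_mul_right (hcont : ∀ r : M, Continuous (· * r))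
    (hS : IsClosed (S : Set M)) {a : M} (ha : a ∈ S) :
    IsClosedLeftIdeal S ((· * a) '' (S : Set M)) := by
  refine ⟨⟨a * a, a, ha, rfl⟩, (hS.isCompact.image (hcont a)).isClosed, ?_⟩
  rintro p hp _ ⟨r, hr, rfl⟩
  exact ⟨p * r, S.mul_mem hp hr, mul_assoc p r a⟩

theorem exists_isMinimalLeftIdeal_subset (hcont : ∀ r : M, Continuous (· * r))
    (hS : IsClosed (S : Set M)) {a : M} (ha : a ∈ S) :
    ∃ L, IsMinimalLeftIdeal S L ∧ L ⊆ (· * a) '' S := by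
  let F : Set (Set M) := {A | IsClosedLeftIdeal S A ∧ A ⊆ (· * a) '' S}
  have hchain : ∀ c ⊆ F, IsChain (· ⊆ ·) c → c.Nonempty → ∃ lb ∈ F, ∀ A ∈ c, lb ⊆ A := by
    intro c hcF hc ⟨A₀, hA₀⟩
    exact ⟨⋂₀ c, ⟨.sInter_of_isChain hc ⟨A₀, hA₀⟩ fun A hA => (hcF hA).1,
      (Set.sInter_subset_of_mem hA₀).trans (hcF hA₀).2⟩, fun A => Set.sInter_subset_of_mem⟩
  obtain ⟨L, -, hLmin⟩ := zorn_superset_nonempty F hchain _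
    ⟨isClosedLeftIdeal_image_mul_right hcont hS ha, subset_rfl⟩
  obtain ⟨hL, hLSa⟩ := hLmin.prop
  have hLS : L ⊆ S := by
    rintro _ hx
    obtain ⟨p, hp, rfl⟩ := hLSa hx
    exact S.mul_mem hp ha
  refine ⟨L, ⟨hL.nonempty, hLS, fun q hq => ?_⟩, hLSa⟩
  have hSq : (· * q) '' (S : Set M) ⊆ L := by
    rintro _ ⟨p, hp, rfl⟩
    exact hL.mul_mem p hp q hq
  exact hSq.antisymm
    (hLmin.2 ⟨isClosedLeftIdeal_image_mul_right hcont hS (hLS hq), hSq.trans hLSa⟩ hSq)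

theorem IsMinimalLeftIdeal.exists_idempotent (hcont : ∀ r : M, Continuous (· * r))
    (hS : IsClosed (S : Set M)) (hL : IsMinimalLeftIdeal S L) : ∃ e ∈ L, e * e = e := by
  obtain ⟨q, hq⟩ := hL.nonempty
  have hLcl : IsClosed L := hL.image_mul_right_eq q hq ▸
    (isClosedLeftIdeal_image_mul_right hcont hS (hL.subset hq)).isClosed
  exact exists_idempotent_in_compact_subsemigroup hcont L hL.nonempty hLcl.isCompact
    fun p hp q hq => hL.mul_mem (hL.subset hp) hq

theorem exists_isMinimalIdempotent (hcont : ∀ r : M, Continuous (· * r))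
    (hS : IsClosed (S : Set M)) (hne : (S : Set M).Nonempty) : ∃ e, IsMinimalIdempotent S e := by
  obtain ⟨a, ha⟩ := hne
  obtain ⟨L, hL, -⟩ := exists_isMinimalLeftIdeal_subset hcont hS ha
  obtain ⟨e, heL, he⟩ := hL.exists_idempotent hcont hS
  exact ⟨e, hL.isMinimalIdempotent heL he⟩

theorem IsMinimalIdempotent.exists_isMinimalLeftIdeal_mem (hcont : ∀ r : M, Continuous (· * r))
    (hS : IsClosed (S : Set M)) {e : M} (he : IsMinimalIdempotent S e) :
    ∃ L, IsMinimalLeftIdeal S L ∧ e ∈ L := by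
  obtain ⟨L, hL, hLe⟩ := exists_isMinimalLeftIdeal_subset hcont hS he.mem
  obtain ⟨v, hvL, hvv⟩ := hL.exists_idempotent hcont hS
  obtain ⟨q, -, hqv⟩ := hLe hvL
  have hve : v * e = v := by rw [← hqv]; simp only [mul_assoc, he.mul_self]
  -- `e * v` is an idempotent of `L` below `e`
  have hev : e * v = e := he.eq_of_le _ (S.mul_mem he.mem (hL.subset hvL))
    (by rw [mul_assoc, ← mul_assoc v, hve, hvv]) (by rw [mul_assoc, hve])
    (by rw [← mul_assoc, he.mul_self])
  exact ⟨L, hL, hev ▸ hL.mul_mem he.mem hvL⟩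

end MinimalIdeals

theorem closure_image_smul_eq {M Y : Type*} [TopologicalSpace M] [CompactSpace M]
    [TopologicalSpace Y] [T2Space Y] [SMul M Y] (G : Set M) {z : Y}
    (hz : Continuous fun p : M => p • z) :
    closure ((· • z) '' G) = (· • z) '' closure G :=
  (image_closure_of_isCompact isClosed_closure.isCompact hz.continuousOn).symm

def Submonoid.envelope {M : Type*} [Monoid M] [TopologicalSpace M] (G : Submonoid M)
    (hr : ∀ r : M, Continuous (· * r)) (hl : ∀ g ∈ G, Continuous (g * ·)) :
    Subsemigroup M where
  carrier := _root_.closure G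
  mul_mem' {a b} ha hb := by
    have hGb : ∀ g ∈ G, g * b ∈ _root_.closure (G : Set M) := fun g hg =>
      map_mem_closure (hl g hg) hb fun x hx => G.mul_mem hg hx
    simpa only [closure_closure] using map_mem_closure (hr b) ha hGb

namespace Function.End

variable {X : Type*} [TopologicalSpace X]

instance : TopologicalSpace (Function.End X) := Pi.topologicalSpace

instance [CompactSpace X] : CompactSpace (Function.End X) :=
  inferInstanceAs (CompactSpace (X → X))

instance [T2Space X] : T2Space (Function.End X) :=
  inferInstanceAs (T2Space (X → X))

theorem continuous_mul_right (r : Function.End X) : Continuous (· * r) :=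
  continuous_pi fun x => continuous_apply (r x)

theorem continuous_mul_left {f : Function.End X} (hf : Continuous f) : Continuous (f * ·) :=
  continuous_pi fun x => hf.comp (continuous_apply x)

theorem continuous_smul_const (x : X) : Continuous fun p : Function.End X => p • x :=
  continuous_apply x

theorem continuous_mul_right_pi {ι : Type*} (r : ι → Function.End X) : Continuous (· * r) :=
  continuous_pi fun i => (continuous_mul_right (r i)).comp (continuous_apply i)

theorem continuous_smul_const_pi {ι : Type*} (z : ι → X) :
    Continuous fun p : ι → Function.End X => p • z :=
  continuous_pi fun i => (continuous_smul_const (z i)).comp (continuous_apply i)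

end Function.End

section Cube

variable (T X : Type*) [CommGroup T] [MulAction T X] (d : ℕ)

/-- `𝒢_d` is the range of this hom: `(s, t)` acts by the diagonal `s` times the face `t`. -/
def cubeHom : T × (Fin d → T) →* (Finset (Fin d) → Function.End X) where
  toFun st ε := MulAction.toEndHom (st.1 * ∏ i ∈ ε, st.2 i)
  map_one' := by ext; simp
  map_mul' st st' := by
    ext ε : 1
    simp only [Prod.fst_mul, Prod.snd_mul, Pi.mul_apply, Finset.prod_mul_distrib, ← map_mul,
      mul_mul_mul_comm]

variable {T X d}

theorem cubeHom_smul (s : T) (t : Fin d → T) (y : Finset (Fin d) → X) :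
    cubeHom T X d (s, t) • y = fun ε => s • faceAct d t y ε :=
  funext fun ε => mul_smul s _ (y ε)

theorem image_smul_mrange_cubeHom (y : Finset (Fin d) → X) :
    (· • y) '' (MonoidHom.mrange (cubeHom T X d) : Set (Finset (Fin d) → Function.End X)) =
      {z | ∃ (t : Fin d → T) (s : T), z = fun ε => s • faceAct d t y ε} := by
  ext z
  simp [cubeHom_smul, eq_comm, exists_comm (α := T)]

variable [TopologicalSpace X]

theorem Qcube_eq_closure_orbit (hc : ∀ t : T, Continuous fun x : X => t • x) {x : X}
    (hx : closure {z : X | ∃ t : T, z = t • x} = Set.univ) :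
    Qcube T X d =
      closure {z | ∃ (t : Fin d → T) (s : T), z = fun ε => s • faceAct d t (fun _ => x) ε} := by
  have hface (s : T) (t : Fin d → T) :
      faceAct d t (fun _ => s • x) = fun ε => s • faceAct d t (fun _ => x) ε :=
    funext fun ε => smul_comm _ s x
  refine (closure_minimal ?_ isClosed_closure).antisymm (closure_mono ?_)
  · rintro _ ⟨x', t, rfl⟩
    have hcont : Continuous fun x' : X => faceAct d t fun _ => x' :=
      continuous_pi fun ε => hc _
    have horbit : (fun x' : X => faceAct d t fun _ => x') '' {z | ∃ s : T, z = s • x} ⊆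
        {z | ∃ (t : Fin d → T) (s : T), z = fun ε => s • faceAct d t (fun _ => x) ε} := by
      rintro _ ⟨_, ⟨s, rfl⟩, rfl⟩
      exact ⟨t, s, hface s t⟩
    exact closure_mono horbit
      (image_closure_subset_closure_image hcont ⟨x', hx ▸ Set.mem_univ x', rfl⟩)
  · rintro _ ⟨t, s, rfl⟩
    exact ⟨s • x, t, (hface s t).symm⟩

theorem continuous_toEndHom_mul (hc : ∀ t : T, Continuous fun x : X => t • x) (t : T) :
    Continuous (MulAction.toEndHom (α := X) t * ·) :=
  Function.End.continuous_mul_left (hc t)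

variable (hc : ∀ t : T, Continuous fun x : X => t • x)

def envelopingSemigroup : Subsemigroup (Function.End X) :=
  (MonoidHom.mrange (MulAction.toEndHom (M := T) (α := X))).envelope
    Function.End.continuous_mul_right (by rintro _ ⟨t, rfl⟩; exact continuous_toEndHom_mul hc t)

variable (d) in
def cubeEnvelopingSemigroup : Subsemigroup (Finset (Fin d) → Function.End X) :=
  (MonoidHom.mrange (cubeHom T X d)).envelope Function.End.continuous_mul_right_pi (by
    rintro _ ⟨st, rfl⟩
    exact continuous_pi fun ε => (continuous_toEndHom_mul hc _).comp (continuous_apply ε))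

theorem apply_mem_envelopingSemigroup {w : Finset (Fin d) → Function.End X}
    (hw : w ∈ cubeEnvelopingSemigroup d hc) (ε : Finset (Fin d)) :
    w ε ∈ envelopingSemigroup hc := by
  refine map_mem_closure (f := fun p => p ε) (continuous_apply ε) hw ?_
  rintro _ ⟨st, rfl⟩
  exact ⟨_, rfl⟩

theorem const_mem_cubeEnvelopingSemigroup {u : Function.End X}
    (hu : u ∈ envelopingSemigroup hc) : (fun _ => u) ∈ cubeEnvelopingSemigroup d hc := by
  refine map_mem_closure (continuous_pi fun _ => continuous_id) hu ?_
  rintro _ ⟨s, rfl⟩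
  refine ⟨(s, 1), funext fun ε => ?_⟩
  simp [cubeHom]

end Cube

theorem stmt8_general {T X : Type*} [CommGroup T] [TopologicalSpace X] [CompactSpace X] [T2Space X]
    [MulAction T X] (hc : ∀ t : T, Continuous fun x : X => t • x)
    (hmin : ∀ x : X, closure {z : X | ∃ t : T, z = t • x} = Set.univ)
    (d : ℕ) :
    ∀ y ∈ Qcube T X d,
      closure {z | ∃ (t : Fin d → T) (s : T), z = fun ε => s • faceAct d t y ε} =
        Qcube T X d := by
  intro y hy
  obtain ⟨u, hu⟩ := exists_isMinimalIdempotent (S := envelopingSemigroup hc)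
    Function.End.continuous_mul_right isClosed_closure ⟨1, subset_closure (one_mem _)⟩
  set x := u (y ∅)
  have hux : u • x = x := congrFun hu.mul_self (y ∅)
  have hu_cube := hu.const (S := cubeEnvelopingSemigroup d hc)
    (fun w hw => apply_mem_envelopingSemigroup hc hw)
    (const_mem_cubeEnvelopingSemigroup hc hu.mem)
  obtain ⟨L, hL, huL⟩ := hu_cube.exists_isMinimalLeftIdeal_mem
    Function.End.continuous_mul_right_pi isClosed_closure
  rw [Qcube_eq_closure_orbit hc (hmin x)] at hy ⊢
  simp only [← image_smul_mrange_cubeHom,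
    closure_image_smul_eq _ (Function.End.continuous_smul_const_pi _)] at hy ⊢
  obtain ⟨p, hp, hpy⟩ := hy
  rw [← hpy]
  exact hL.image_smul_eq huL (funext fun _ => hux) hp

/-- For a minimal flow `(X,T)` with `T` abelian, the flow `(Q^{[d]}, 𝒢_d)` is minimal:
the `𝒢_d`-orbit (face action together with the diagonal action) of every point of
`Q^{[d]}` is dense in `Q^{[d]}`. -/
theorem stmt8 {T X : Type*} [CommGroup T] [TopologicalSpace X] [CompactSpace X] [T2Space X]
    [MulAction T X] (hc : ∀ t : T, Continuous fun x : X => t • x)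
    (hmin : ∀ x : X, closure {z : X | ∃ t : T, z = t • x} = Set.univ)
    (d : ℕ) (hd : 1 ≤ d) :
    ∀ y ∈ Qcube T X d,
      closure {z | ∃ (t : Fin d → T) (s : T), z = fun ε => s • faceAct d t y ε} =
        Qcube T X d :=
  stmt8_general hc hmin d
end

section
/- Let $(X,T)$ be a minimal flow with $T$ abelian, $d \geq 1$, and $x \in X$. Then the orbit closure $Y_x^{[d]} = \overline{\mathcal{F}_d(x^{[d]})}$ of the diagonal point $x^{[d]}$ under the face group action is a minimal $\mathcal{F}_d$-flow. -/
/-!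
A point `z` of a compact flow has a minimal orbit closure as soon as it is fixed by an element
of a minimal closed left ideal `L` of the Ellis semigroup: for `p` in the semigroup, minimality
gives `L = E ∘ (p ∘ W)`, so some `s` maps `p z` back to `z`.

For `x` in the minimal flow `X`, choose an idempotent `u` of a minimal left ideal of `E(X)` with
`u x = x`. The map `W` acting by `u` on every nonempty coordinate of `X^{[d]}` is a composite of
lifts of `u` along single directions, so it lies in the face Ellis semigroup, and it fixes
`x^{[d]}`. To see that `W` lies in a minimal left ideal, take an idempotent `w = r ∘ W` of a
minimal left ideal inside `E ∘ W`: each nonempty coordinate of `w` is an idempotent of the minimal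
left ideal containing `u`, hence a right identity for `u`, so `W ∘ w = W`.
-/

open Function Set MulAction

section LeftIdeal

variable (G K : Type*) [TopologicalSpace K] [SMul G K]

def ellisSemigroup : Set (K → K) :=
  closure (range fun g : G => (g • · : K → K))

variable {K}

structure IsClosedLeftIdeal_s9 (A : Set (K → K)) : Prop where
  nonempty : A.Nonempty
  isClosed : IsClosed A
  subset : A ⊆ ellisSemigroup G K
  comp_mem : ∀ p ∈ ellisSemigroup G K, ∀ a ∈ A, p ∘ a ∈ A

abbrev IsMinimalLeftIdeal_s9 (L : Set (K → K)) : Prop :=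
  Minimal (IsClosedLeftIdeal_s9 G) L

variable {G}

theorem exists_isMinimalLeftIdeal_subset_s9 [CompactSpace K] {A : Set (K → K)}
    (hA : IsClosedLeftIdeal_s9 G A) :
    ∃ L ⊆ A, IsMinimalLeftIdeal_s9 G L := by
  refine zorn_superset_nonempty {B | IsClosedLeftIdeal_s9 G B} ?_ A hA
  intro c hc hchain ⟨B₀, hB₀⟩
  have : Nonempty c := ⟨⟨B₀, hB₀⟩⟩
  refine ⟨⋂₀ c, ⟨?_, isClosed_sInter fun B hB => (hc hB).isClosed,
    (sInter_subset_of_mem hB₀).trans (hc hB₀).subset,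
    fun p hp a ha B hB => (hc hB).comp_mem p hp a (ha B hB)⟩,
    fun B hB => sInter_subset_of_mem hB⟩
  exact IsCompact.nonempty_sInter_of_directed_nonempty_isCompact_isClosed
    (fun A hA B hB => (hchain.total hA hB).elim
      (fun h => ⟨A, hA, Subset.rfl, h⟩) (fun h => ⟨B, hB, h, Subset.rfl⟩))
    (fun B hB => (hc hB).nonempty)
    (fun B hB => (hc hB).isClosed.isCompact) (fun B hB => (hc hB).isClosed)

end LeftIdeal

theorem exists_idempotent_of_isClosed {K : Type*} [TopologicalSpace K] [CompactSpace K]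
    [T2Space K] {Γ : Set (K → K)} (hne : Γ.Nonempty) (hcl : IsClosed Γ)
    (hmul : ∀ p ∈ Γ, ∀ q ∈ Γ, p ∘ q ∈ Γ) : ∃ w ∈ Γ, w ∘ w = w :=
  @exists_idempotent_in_compact_subsemigroup (Function.End K) _ Pi.topologicalSpace
    (inferInstanceAs (T2Space (K → K))) (fun r => Pi.continuous_precomp r) Γ hne hcl.isCompact
    hmul

section EllisSemigroup

variable {G K : Type*} [Monoid G] [MulAction G K] [TopologicalSpace K]

theorem id_mem_ellisSemigroup : id ∈ ellisSemigroup G K :=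
  subset_closure ⟨1, funext (one_smul G)⟩

theorem ellisSemigroup_subset {C : Set (K → K)} (hC : IsClosed C)
    (hgen : ∀ g : G, (g • ·) ∈ C) : ellisSemigroup G K ⊆ C :=
  hC.closure_subset_iff.2 (range_subset_iff.2 hgen)

theorem comp_mem_ellisSemigroup [ContinuousConstSMul G K] {p q : K → K}
    (hp : p ∈ ellisSemigroup G K) (hq : q ∈ ellisSemigroup G K) :
    p ∘ q ∈ ellisSemigroup G K := by
  have hgen : ∀ g : G, (g • ·) ∘ q ∈ ellisSemigroup G K := fun g =>
    ellisSemigroup_subset (isClosed_closure.preimage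
      (Pi.continuous_postcomp (continuous_const_smul g)))
      (fun h => subset_closure (⟨g * h, funext fun z => mul_smul g h z⟩ : _ ∈ range _)) hq
  exact ellisSemigroup_subset (isClosed_closure.preimage (Pi.continuous_precomp q)) hgen hp

theorem closure_orbit_eq_image_ellisSemigroup [CompactSpace K] [T2Space K] (z : K) :
    closure (orbit G z) = (fun p => p z) '' ellisSemigroup G K := by
  rw [ellisSemigroup, ← (continuous_apply z).isClosedMap.closure_image_eq_of_continuous
    (continuous_apply z), ← range_comp]
  rfl

variable [ContinuousConstSMul G K]

theorem isClosedLeftIdeal_ellisSemigroup : IsClosedLeftIdeal_s9 G (ellisSemigroup G K) :=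
  ⟨⟨id, id_mem_ellisSemigroup⟩, isClosed_closure, Subset.rfl,
    fun _ hp _ ha => comp_mem_ellisSemigroup hp ha⟩

variable [CompactSpace K] [T2Space K] {A L : Set (K → K)}

theorem IsClosedLeftIdeal_s9.image_comp_right (hA : IsClosedLeftIdeal_s9 G A) {a : K → K}
    (ha : a ∈ ellisSemigroup G K) : IsClosedLeftIdeal_s9 G ((· ∘ a) '' A) where
  nonempty := hA.nonempty.image _
  isClosed := (hA.isClosed.isCompact.image (Pi.continuous_precomp a)).isClosed
  subset := by
    rintro _ ⟨q, hq, rfl⟩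
    exact comp_mem_ellisSemigroup (hA.subset hq) ha
  comp_mem := by
    rintro p hp _ ⟨q, hq, rfl⟩
    exact ⟨p ∘ q, hA.comp_mem p hp q hq, rfl⟩

theorem IsMinimalLeftIdeal_s9.image_comp_right_eq (hL : IsMinimalLeftIdeal_s9 G L) {a : K → K}
    (ha : a ∈ L) : (· ∘ a) '' ellisSemigroup G K = L :=
  hL.eq_of_subset (isClosedLeftIdeal_ellisSemigroup.image_comp_right (hL.prop.subset ha))
    (by rintro _ ⟨p, hp, rfl⟩; exact hL.prop.comp_mem p hp a ha)

theorem IsMinimalLeftIdeal_s9.comp_eq_self_of_idempotent (hL : IsMinimalLeftIdeal_s9 G L)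
    {θ m : K → K} (hθ : θ ∈ L) (hθθ : θ ∘ θ = θ) (hm : m ∈ L) : m ∘ θ = m := by
  rw [← hL.image_comp_right_eq hθ] at hm
  obtain ⟨q, -, rfl⟩ := hm
  rw [comp_assoc, hθθ]

theorem closure_orbit_eq_of_isMinimalLeftIdeal (hL : IsMinimalLeftIdeal_s9 G L) {W : K → K}
    (hW : W ∈ L) {z y : K} (hWz : W z = z) (hy : y ∈ closure (orbit G z)) :
    closure (orbit G y) = closure (orbit G z) := by
  simp only [closure_orbit_eq_image_ellisSemigroup] at hy ⊢
  obtain ⟨p, hp, rfl⟩ := hy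
  have hW' : W ∈ (· ∘ (p ∘ W)) '' ellisSemigroup G K := by
    rwa [hL.image_comp_right_eq (hL.prop.comp_mem p hp W hW)]
  obtain ⟨s, hs, hsW⟩ := hW'
  have hsz : s (p z) = z := by simpa [hWz] using congrFun hsW z
  apply Subset.antisymm
  · rintro _ ⟨q, hq, rfl⟩
    exact ⟨q ∘ p, comp_mem_ellisSemigroup hq hp, rfl⟩
  · rintro _ ⟨q, hq, rfl⟩
    exact ⟨q ∘ s, comp_mem_ellisSemigroup hq hs, congrArg q hsz⟩

theorem exists_isMinimalLeftIdeal_idempotent_apply_eq [IsMinimal G K] (x : K) :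
    ∃ L u, IsMinimalLeftIdeal_s9 G L ∧ u ∈ L ∧ u ∘ u = u ∧ u x = x := by
  obtain ⟨L, -, hL⟩ :=
    exists_isMinimalLeftIdeal_subset_s9 (isClosedLeftIdeal_ellisSemigroup (G := G) (K := K))
  obtain ⟨p₀, hp₀⟩ := hL.prop.nonempty
  have hxL : x ∈ (fun q => q x) '' L := by
    have hclosed : IsClosed ((fun q : K → K => q x) '' L) :=
      (hL.prop.isClosed.isCompact.image (continuous_apply x)).isClosed
    refine closure_minimal ?_ hclosed ((dense_orbit G (p₀ x)).closure_eq ▸ mem_univ x)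
    rintro _ ⟨g, rfl⟩
    exact ⟨(g • ·) ∘ p₀, hL.prop.comp_mem _ (subset_closure ⟨g, rfl⟩) _ hp₀, rfl⟩
  obtain ⟨p, hp, hpx⟩ := hxL
  obtain ⟨u, ⟨hu, hux⟩, huu⟩ := exists_idempotent_of_isClosed (Γ := L ∩ {q | q x = x})
    ⟨p, hp, hpx⟩ (hL.prop.isClosed.inter (isClosed_eq (continuous_apply x) continuous_const))
    (fun a ⟨ha, (hax : a x = x)⟩ b ⟨hb, (hbx : b x = x)⟩ =>
      ⟨hL.prop.comp_mem a (hL.prop.subset ha) b hb, by simp [hbx, hax]⟩)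
  exact ⟨L, u, hL, hu, huu, hux⟩

end EllisSemigroup

section FaceAction

variable {T X : Type*} [CommGroup T] [MulAction T X] (d : ℕ)

@[reducible]
def faceMulAction : MulAction (Fin d → T) (Finset (Fin d) → X) where
  smul := faceAct d
  one_smul z := funext fun ε => by
    show (∏ i ∈ ε, (1 : Fin d → T) i) • z ε = z ε
    simp
  mul_smul t s z := funext fun ε => by
    show (∏ i ∈ ε, (t * s) i) • z ε = (∏ i ∈ ε, t i) • (∏ i ∈ ε, s i) • z ε
    simp [Finset.prod_mul_distrib, mul_smul]

attribute [local instance] faceMulAction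

variable {d}

theorem faceMulAction_smul_apply (t : Fin d → T) (z : Finset (Fin d) → X)
    (ε : Finset (Fin d)) :
    (t • z) ε = (∏ i ∈ ε, t i) • z ε :=
  rfl

theorem orbit_faceMulAction (z : Finset (Fin d) → X) :
    orbit (Fin d → T) z = {w | ∃ t : Fin d → T, w = faceAct d t z} :=
  Set.ext fun _ => exists_congr fun _ => eq_comm

def cubeLift (s : Finset (Fin d)) (q : X → X) (z : Finset (Fin d) → X) : Finset (Fin d) → X :=
  fun ε => if Disjoint s ε then z ε else q (z ε)

theorem cubeLift_insert {u : X → X} (huu : u ∘ u = u) (i : Fin d) (s : Finset (Fin d)) :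
    cubeLift (insert i s) u = cubeLift {i} u ∘ cubeLift s u := by
  funext z ε
  simp only [cubeLift, comp_apply, Finset.disjoint_insert_left, Finset.disjoint_singleton_left]
  have huu' : ∀ a, u (u a) = u a := congrFun huu
  split_ifs <;> simp_all

theorem cubeLift_const {q : X → X} {x : X} (hqx : q x = x) (s : Finset (Fin d)) :
    cubeLift s q (fun _ => x) = fun _ => x :=
  funext fun ε => by simp [cubeLift, hqx]

theorem cubeLift_univ_apply (q : X → X) (z : Finset (Fin d) → X) (ε : Finset (Fin d)) :
    cubeLift Finset.univ q z ε = if ε = ∅ then z ε else q (z ε) := by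
  simp only [cubeLift, ← Finset.top_eq_univ, top_disjoint, Finset.bot_eq_empty]

variable [TopologicalSpace X]

theorem continuousConstSMul_faceMulAction [ContinuousConstSMul T X] :
    ContinuousConstSMul (Fin d → T) (Finset (Fin d) → X) :=
  ⟨fun _ => continuous_pi fun ε => (continuous_const_smul _).comp (continuous_apply ε)⟩

attribute [local instance] continuousConstSMul_faceMulAction

theorem apply_empty_of_mem_ellisSemigroup [T2Space X]
    {p : (Finset (Fin d) → X) → Finset (Fin d) → X}
    (hp : p ∈ ellisSemigroup (Fin d → T) (Finset (Fin d) → X)) (z : Finset (Fin d) → X) :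
    p z ∅ = z ∅ := by
  refine ellisSemigroup_subset
    (C := {p : (Finset (Fin d) → X) → Finset (Fin d) → X | ∀ z, p z ∅ = z ∅})
    ?_ (fun _ z => ?_) hp z
  · simp only [ofPred_forall]
    exact isClosed_iInter fun z =>
      isClosed_eq ((continuous_apply ∅).comp (continuous_apply z)) continuous_const
  · simp [faceMulAction_smul_apply]

theorem exists_mem_ellisSemigroup_apply_eq [CompactSpace X] [T2Space X]
    {p : (Finset (Fin d) → X) → Finset (Fin d) → X}
    (hp : p ∈ ellisSemigroup (Fin d → T) (Finset (Fin d) → X)) (ε : Finset (Fin d)) :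
    ∃ q ∈ ellisSemigroup T X, ∀ z, p z ε = q (z ε) := by
  let coord (p : (Finset (Fin d) → X) → Finset (Fin d) → X) (z : Finset (Fin d) → X) :=
    p z ε
  let lift (q : X → X) (z : Finset (Fin d) → X) := q (z ε)
  have hclosed : IsClosed (coord ⁻¹' (lift '' ellisSemigroup T X)) :=
    ((isClosed_closure.isCompact.image (Pi.continuous_precomp _)).isClosed).preimage
      (continuous_pi fun z => (continuous_apply ε).comp (continuous_apply z))
  obtain ⟨q, hq, hqp⟩ := ellisSemigroup_subset hclosed
    (fun t => ⟨((∏ i ∈ ε, t i) • ·), subset_closure ⟨_, rfl⟩, rfl⟩) hp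
  exact ⟨q, hq, fun z => (congrFun hqp z).symm⟩

theorem cubeLift_singleton_mem_ellisSemigroup (i : Fin d) {q : X → X}
    (hq : q ∈ ellisSemigroup T X) :
    cubeLift {i} q ∈ ellisSemigroup (Fin d → T) (Finset (Fin d) → X) := by
  have hcont : Continuous (cubeLift (X := X) {i}) :=
    continuous_pi fun z => continuous_pi fun ε =>
      continuous_if_const _ (fun _ => continuous_const) (fun _ => continuous_apply _)
  refine map_mem_closure hcont hq ?_
  rintro _ ⟨t, rfl⟩
  refine ⟨Pi.mulSingle i t, funext fun z => funext fun ε => ?_⟩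
  simp only [faceMulAction_smul_apply, Finset.prod_pi_mulSingle', cubeLift,
    Finset.disjoint_singleton_left]
  split_ifs <;> simp

theorem cubeLift_mem_ellisSemigroup [ContinuousConstSMul T X] {u : X → X}
    (hu : u ∈ ellisSemigroup T X) (huu : u ∘ u = u) (s : Finset (Fin d)) :
    cubeLift s u ∈ ellisSemigroup (Fin d → T) (Finset (Fin d) → X) := by
  induction s using Finset.induction_on with
  | empty => exact (funext fun z => funext fun ε => if_pos (Finset.disjoint_empty_left ε) :
      cubeLift ∅ u = id) ▸ id_mem_ellisSemigroup
  | insert i s _ ih =>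
    rw [cubeLift_insert huu]
    exact comp_mem_ellisSemigroup (cubeLift_singleton_mem_ellisSemigroup i hu) ih

variable [CompactSpace X] [T2Space X] [ContinuousConstSMul T X] {LX : Set (X → X)}
  {u : X → X}

theorem cubeLift_univ_comp_eq_of_idempotent (hLX : IsMinimalLeftIdeal_s9 T LX) (hu : u ∈ LX)
    (huu : u ∘ u = u) {r : (Finset (Fin d) → X) → Finset (Fin d) → X}
    (hr : r ∈ ellisSemigroup (Fin d → T) (Finset (Fin d) → X))
    (hww : (r ∘ cubeLift Finset.univ u) ∘ (r ∘ cubeLift Finset.univ u) =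
      r ∘ cubeLift Finset.univ u) :
    cubeLift Finset.univ u ∘ (r ∘ cubeLift Finset.univ u) = cubeLift Finset.univ u := by
  set w := r ∘ cubeLift Finset.univ u
  funext z ε
  by_cases hε : ε = ∅
  · subst hε
    have hw : w ∈ ellisSemigroup (Fin d → T) (Finset (Fin d) → X) :=
      comp_mem_ellisSemigroup hr (cubeLift_mem_ellisSemigroup (hLX.prop.subset hu) huu _)
    simp only [comp_apply, cubeLift_univ_apply, if_true]
    exact apply_empty_of_mem_ellisSemigroup hw z
  obtain ⟨q, hq, hrq⟩ := exists_mem_ellisSemigroup_apply_eq hr ε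
  have hw : ∀ z, w z ε = (q ∘ u) (z ε) := fun z => by
    simp only [w, comp_apply, hrq, cubeLift_univ_apply, if_neg hε]
  have hθθ : (q ∘ u) ∘ (q ∘ u) = q ∘ u := funext fun a => by
    simpa [hw] using congrFun (congrFun hww fun _ => a) ε
  have huθ := hLX.comp_eq_self_of_idempotent (hLX.prop.comp_mem q hq u hu) hθθ hu
  simp only [comp_apply, cubeLift_univ_apply, if_neg hε, hw]
  exact congrFun huθ (z ε)

theorem exists_isMinimalLeftIdeal_cubeLift_univ_mem (hLX : IsMinimalLeftIdeal_s9 T LX)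
    (hu : u ∈ LX) (huu : u ∘ u = u) :
    ∃ L, IsMinimalLeftIdeal_s9 (Fin d → T) L ∧ cubeLift (d := d) Finset.univ u ∈ L := by
  have hW := cubeLift_mem_ellisSemigroup (d := d) (hLX.prop.subset hu) huu Finset.univ
  obtain ⟨L, hLW, hL⟩ :=
    exists_isMinimalLeftIdeal_subset_s9 (isClosedLeftIdeal_ellisSemigroup.image_comp_right hW)
  obtain ⟨w, hwL, hww⟩ := exists_idempotent_of_isClosed hL.prop.nonempty hL.prop.isClosed
    fun p hp q hq => hL.prop.comp_mem p (hL.prop.subset hp) q hq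
  obtain ⟨r, hr, rfl⟩ := hLW hwL
  refine ⟨L, hL, ?_⟩
  rw [← cubeLift_univ_comp_eq_of_idempotent hLX hu huu hr hww]
  exact hL.prop.comp_mem _ hW _ hwL

theorem closure_orbit_eq_of_mem_closure_orbit_diagonal [IsMinimal T X] (x : X)
    {y : Finset (Fin d) → X} (hy : y ∈ closure (orbit (Fin d → T) fun _ => x)) :
    closure (orbit (Fin d → T) y) = closure (orbit (Fin d → T) fun _ => x) := by
  obtain ⟨LX, u, hLX, hu, huu, hux⟩ := exists_isMinimalLeftIdeal_idempotent_apply_eq (G := T) x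
  obtain ⟨L, hL, hWL⟩ := exists_isMinimalLeftIdeal_cubeLift_univ_mem (d := d) hLX hu huu
  exact closure_orbit_eq_of_isMinimalLeftIdeal hL hWL (cubeLift_const hux Finset.univ) hy

end FaceAction

theorem stmt9_general {T X : Type*} [CommGroup T] [TopologicalSpace X] [CompactSpace X] [T2Space X]
    [MulAction T X] (hc : ∀ t : T, Continuous fun x : X => t • x)
    (hmin : ∀ x : X, closure {z : X | ∃ t : T, z = t • x} = Set.univ)
    (d : ℕ) (x : X) :
    ∀ y ∈ closure {w | ∃ t : Fin d → T, w = faceAct d t fun _ => x},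
      closure {w | ∃ t : Fin d → T, w = faceAct d t y} =
        closure {w | ∃ t : Fin d → T, w = faceAct d t fun _ => x} := by
  have : ContinuousConstSMul T X := ⟨hc⟩
  have : IsMinimal T X := ⟨fun z => by
    rw [dense_iff_closure_eq, ← hmin z]
    exact congrArg closure (Set.ext fun _ => exists_congr fun _ => eq_comm)⟩
  let := faceMulAction (T := T) (X := X) d
  simp only [← orbit_faceMulAction]
  exact fun y => closure_orbit_eq_of_mem_closure_orbit_diagonal x

/-- For a minimal flow `(X,T)` with `T` abelian, the face-group orbit closure
`Y_x^{[d]}` of the diagonal point `x^{[d]}` is a minimal `𝓕_d`-flow: the face orbit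
of each of its points is dense in it. -/
theorem stmt9 {T X : Type*} [CommGroup T] [TopologicalSpace X] [CompactSpace X] [T2Space X]
    [MulAction T X] (hc : ∀ t : T, Continuous fun x : X => t • x)
    (hmin : ∀ x : X, closure {z : X | ∃ t : T, z = t • x} = Set.univ)
    (d : ℕ) (hd : 1 ≤ d) (x : X) :
    ∀ y ∈ closure {w | ∃ t : Fin d → T, w = faceAct d t fun _ => x},
      closure {w | ∃ t : Fin d → T, w = faceAct d t y} =
        closure {w | ∃ t : Fin d → T, w = faceAct d t fun _ => x} :=
  stmt9_general hc hmin d x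
end

section
/- Let $(X,T)$ be a minimal flow, let $p_1, \dots, p_d \in E(X,T)$, and for each nonempty $\epsilon = \{n_1 < \dots < n_k\} \subset \{1,\dots,d\}$ set $q_\epsilon = p_{n_k} \cdots p_{n_1}$. Then for any $x \in X$, the map $(q_\epsilon : \emptyset \neq \epsilon \subset \{1,\dots,d\})$, acting coordinatewise, is an element of the enveloping semigroup $E(Q_{x_*}^{[d]}, \mathcal{F}_d)$. -/
/-- The enveloping semigroup of the flow `(X,T)`. -/
def envSemigroup (T X : Type*) [Group T] [MulAction T X] [TopologicalSpace X] :
    Set (X → X) :=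
  closure (Set.range fun t : T => fun x : X => t • x)

/-- Nonempty subsets of `{1,…,d}`, indexing the coordinates of `X_*^{[d]}`. -/
def NESub (d : ℕ) := {ε : Finset (Fin d) // ε.Nonempty}

/-- `Q_{x_*}^{[d]}`: the projection of `Q_x^{[d]} = Q^{[d]} ∩ ({x} × X^{2^d - 1})`
obtained by forgetting the `∅`-coordinate. -/
def Qstar (T X : Type*) [CommGroup T] [MulAction T X] [TopologicalSpace X] (d : ℕ)
    (x : X) : Set (NESub d → X) :=
  {z | ∃ y ∈ Qcube T X d, y ∅ = x ∧ ∀ ε : NESub d, z ε = y ε.1}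

/-- The ordered product `q_ε = p_{n_k} ∘ ⋯ ∘ p_{n_1}` for `ε = {n_1 < ⋯ < n_k}`. -/
def qcomp {X : Type*} {d : ℕ} (p : Fin d → X → X) (ε : Finset (Fin d)) : X → X :=
  (ε.sort (· ≤ ·)).foldl (fun acc i => p i ∘ acc) id

/-!
Since `q_ε` applies `p_j` before the `p_i` with `i > j`, and `X^X` carries the pointwise
topology, the family `(q_ε)_ε` depends continuously on `p_j` as long as every `p_i` with `i > j`
is a (continuous) translation by an element of `T`. Starting from translations `p_i = t_i`, where
`q_ε` is the face translation by `∏_{i ∈ ε} t_i`, one can therefore replace `t_1, t_2, …, t_d`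
in turn by limits in `E(X,T)` without leaving the closure of the face translations.
-/

open Function

theorem IsClosed.apply_mem_of_forall_mem_closure {ι α β : Type*} [LinearOrder ι] [Fintype ι]
    [TopologicalSpace α] [TopologicalSpace β] {A : Set α} {K : Set β} (hK : IsClosed K)
    (f : (ι → α) → β)
    (hcont : ∀ j (r : ι → α), (∀ i, j < i → r i ∈ A) → Continuous fun q => f (update r j q))
    (hA : ∀ r : ι → α, (∀ i, r i ∈ A) → f r ∈ K) (r : ι → α) (hr : ∀ i, r i ∈ closure A) :
    f r ∈ K := by
  suffices H : ∀ s : Finset ι, ∀ r : ι → α, (∀ i ∈ s, r i ∈ closure A) →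
      (∀ i ∉ s, r i ∈ A) → f r ∈ K from
    H Finset.univ r (fun i _ => hr i) (fun i hi => absurd (Finset.mem_univ i) hi)
  intro s
  induction s using Finset.induction_on_max with
  | empty => exact fun r _ hA' => hA r fun i => hA' i (Finset.notMem_empty i)
  | insert a s has ih =>
    intro r hcl hA'
    have hmaps : Set.MapsTo (fun q => f (update r a q)) A K := by
      intro q hq
      refine ih _ (fun i hi => ?_) (fun i hi => ?_)
      · rw [update_of_ne (has i hi).ne]
        exact hcl i (Finset.mem_insert_of_mem hi)
      · rcases eq_or_ne i a with rfl | hia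
        · simpa using hq
        · rw [update_of_ne hia]
          exact hA' i (by simp [hia, hi])
    have hgt : ∀ i, a < i → r i ∈ A := fun i hai =>
      hA' i (by simpa [hai.ne'] using fun hi => lt_asymm hai (has i hi))
    simpa [hK.closure_eq] using
      map_mem_closure (hcont a r hgt) (hcl a (Finset.mem_insert_self a s)) hmaps

theorem List.foldl_comp_eq_comp {X ι : Type*} (r : ι → X → X) (l : List ι) (g : X → X) :
    l.foldl (fun acc i => r i ∘ acc) g = l.foldl (fun acc i => r i ∘ acc) id ∘ g := by
  induction l generalizing g with
  | nil => rfl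
  | cons i l ih => simp only [List.foldl_cons, ih (r i ∘ g), ih (r i ∘ id)]; rfl

section qcomp

variable {X : Type*} {d : ℕ} (r : Fin d → X → X)

@[simp]
theorem qcomp_empty : qcomp r ∅ = id := by
  simp [qcomp]

theorem qcomp_insert_of_lt {a : Fin d} {s : Finset (Fin d)} (has : ∀ x ∈ s, a < x) :
    qcomp r (insert a s) = qcomp r s ∘ r a := by
  rw [qcomp, Finset.sort_insert _ (fun x hx => (has x hx).le) fun h => (has a h).false,
    List.foldl_cons, List.foldl_comp_eq_comp]
  rfl

theorem qcomp_congr {r' : Fin d → X → X} {s : Finset (Fin d)} (h : ∀ i ∈ s, r i = r' i) :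
    qcomp r s = qcomp r' s := by
  induction s using Finset.induction_on_min with
  | empty => simp
  | insert a s has ih =>
    rw [qcomp_insert_of_lt r has, qcomp_insert_of_lt r' has, h a (Finset.mem_insert_self a s),
      ih fun i hi => h i (Finset.mem_insert_of_mem hi)]

theorem qcomp_smul {T : Type*} [CommMonoid T] [MulAction T X] (t : Fin d → T)
    (s : Finset (Fin d)) : qcomp (fun i (a : X) => t i • a) s = fun a => (∏ i ∈ s, t i) • a := by
  induction s using Finset.induction_on_min with
  | empty => funext a; simp
  | insert a s has ih =>
    funext x
    rw [qcomp_insert_of_lt _ has, Finset.prod_insert fun h => (has a h).false, comp_apply, ih,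
      mul_comm, mul_smul]

variable [TopologicalSpace X]

theorem continuous_qcomp {s : Finset (Fin d)} (h : ∀ i ∈ s, Continuous (r i)) :
    Continuous (qcomp r s) := by
  induction s using Finset.induction_on_min with
  | empty => simpa using continuous_id
  | insert a s has ih =>
    rw [qcomp_insert_of_lt r has]
    exact (ih fun i hi => h i (Finset.mem_insert_of_mem hi)).comp
      (h a (Finset.mem_insert_self a s))

theorem continuous_qcomp_update_apply (s : Finset (Fin d)) {j : Fin d}
    (h : ∀ i, j < i → Continuous (r i)) (x : X) :
    Continuous fun q => qcomp (update r j q) s x := by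
  induction s using Finset.induction_on_min generalizing x with
  | empty => simpa using continuous_const
  | insert a s has ih =>
    simp only [qcomp_insert_of_lt _ has, comp_apply]
    rcases eq_or_ne a j with rfl | haj
    · have hs : ∀ q, qcomp (update r a q) s = qcomp r s := fun q =>
        qcomp_congr _ fun i hi => update_of_ne (has i hi).ne' _ _
      simp only [hs, update_self]
      exact (continuous_qcomp r fun i hi => h i (has i hi)).comp (continuous_apply x)
    · simpa only [update_of_ne haj] using ih (r a x)

end qcomp

theorem stmt10_general {T X : Type*} [CommGroup T] [TopologicalSpace X]
    [MulAction T X] (hc : ∀ t : T, Continuous fun x : X => t • x)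
    (d : ℕ) (p : Fin d → X → X)
    (hp : ∀ i, p i ∈ envSemigroup T X) (x : X) :
    (fun (y : Qstar T X d x) (ε : NESub d) => qcomp p ε.1 (y.1 ε)) ∈
      closure (Set.range fun t : Fin d → T =>
        fun (y : Qstar T X d x) (ε : NESub d) => (∏ i ∈ ε.1, t i) • y.1 ε) := by
  refine isClosed_closure.apply_mem_of_forall_mem_closure
    (A := Set.range fun t : T => fun x : X => t • x)
    (fun (r : Fin d → X → X) (y : Qstar T X d x) (ε : NESub d) => qcomp r ε.1 (y.1 ε))
    (fun j r hr => ?_) (fun r hr => ?_) p hp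
  · have hrc : ∀ i, j < i → Continuous (r i) := fun i hi => by
      obtain ⟨t, ht⟩ := hr i hi
      exact ht ▸ hc t
    exact continuous_pi fun y => continuous_pi fun ε =>
      continuous_qcomp_update_apply r ε.1 hrc (y.1 ε)
  · choose t ht using hr
    obtain rfl : (fun i a => t i • a) = r := funext ht
    exact subset_closure ⟨t, by simp only [qcomp_smul]⟩

/-- Given `p_1,…,p_d ∈ E(X,T)`, the coordinatewise map `(q_ε)_{∅ ≠ ε ⊆ {1,…,d}}` is an
element of the enveloping semigroup `E(Q_{x_*}^{[d]}, 𝓕_d)`: its restriction to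
`Q_{x_*}^{[d]}` lies in the closure of the face-group translations. -/
theorem stmt10 {T X : Type*} [CommGroup T] [TopologicalSpace X] [CompactSpace X] [T2Space X]
    [MulAction T X] (hc : ∀ t : T, Continuous fun x : X => t • x)
    (hmin : ∀ x : X, closure {z : X | ∃ t : T, z = t • x} = Set.univ)
    (d : ℕ) (hd : 1 ≤ d) (p : Fin d → X → X)
    (hp : ∀ i, p i ∈ envSemigroup T X) (x : X) :
    (fun (y : Qstar T X d x) (ε : NESub d) => qcomp p ε.1 (y.1 ε)) ∈
      closure (Set.range fun t : Fin d → T =>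
        fun (y : Qstar T X d x) (ε : NESub d) => (∏ i ∈ ε.1, t i) • y.1 ε) :=
  stmt10_general hc d p hp x
end

section
/- Let $(X,T)$ be a minimal metric flow with $T$ abelian, $d \geq 1$, and $x, y \in X$. Then $(x,y) \in RP^{[d]}$ if and only if there exists $a_* \in X^{2^d - 1}$ such that $(x, a_*, y, a_*) \in Q^{[d+1]}$. -/
/-- The regionally proximal relation of order `d`. -/
def RP (T : Type*) {X : Type*} [CommGroup T] [MulAction T X] [MetricSpace X]
    (d : ℕ) (x y : X) : Prop :=
  ∀ δ > (0 : ℝ), ∃ (x' y' : X) (t : Fin d → T),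
    dist x x' < δ ∧ dist y y' < δ ∧
    ∀ ε : Finset (Fin d), ε.Nonempty →
      dist ((∏ i ∈ ε, t i) • x') ((∏ i ∈ ε, t i) • y') < δ

/-- `ε ⊆ {1,…,d+1}` restricted to the first `d` indices. -/
noncomputable def lowSet (d : ℕ) (ε : Finset (Fin (d + 1))) : Finset (Fin d) :=
  Finset.preimage ε Fin.castSucc (Function.Injective.injOn (Fin.castSucc_injective d))

/-- The point `(x, a_*, y, a_*) ∈ X^{[d+1]} = X^{[d]} × X^{[d]}`: the `∅`-coordinate is
`x`, the `{d+1}`-coordinate is `y`, and any other coordinate `ε` is `a (ε \ {d+1})`. -/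
noncomputable def pointXY {X : Type*} (d : ℕ) (x y : X) (a : Finset (Fin d) → X) :
    Finset (Fin (d + 1)) → X :=
  fun ε =>
    if Fin.last d ∈ ε then (if ε = {Fin.last d} then y else a (lowSet d ε))
    else (if ε = ∅ then x else a (lowSet d ε))

open Finset

lemma Fin.last_notMem_map_castSuccEmb (d : ℕ) (ε : Finset (Fin d)) :
    Fin.last d ∉ ε.map Fin.castSuccEmb := by
  simp [Fin.castSucc_ne_last]

lemma map_castSuccEmb_lowSet (d : ℕ) (E : Finset (Fin (d + 1))) :
    (lowSet d E).map Fin.castSuccEmb = E.erase (Fin.last d) := by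
  ext j
  simp only [mem_map, lowSet, mem_preimage, mem_erase, Fin.coe_castSuccEmb]
  constructor
  · rintro ⟨i, hi, rfl⟩
    exact ⟨Fin.castSucc_ne_last i, hi⟩
  · rintro ⟨hne, hj⟩
    obtain ⟨i, rfl⟩ := Fin.exists_castSucc_eq.mpr hne
    exact ⟨i, hj, rfl⟩

lemma lowSet_map_castSuccEmb (d : ℕ) (ε : Finset (Fin d)) :
    lowSet d (ε.map Fin.castSuccEmb) = ε := by
  apply map_injective Fin.castSuccEmb
  rw [map_castSuccEmb_lowSet, erase_eq_of_notMem (Fin.last_notMem_map_castSuccEmb d ε)]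

lemma lowSet_insert_last_map_castSuccEmb (d : ℕ) (ε : Finset (Fin d)) :
    lowSet d (insert (Fin.last d) (ε.map Fin.castSuccEmb)) = ε := by
  apply map_injective Fin.castSuccEmb
  rw [map_castSuccEmb_lowSet, erase_insert (Fin.last_notMem_map_castSuccEmb d ε)]

lemma exists_eq_map_castSuccEmb_or_eq_insert_last (d : ℕ) (E : Finset (Fin (d + 1))) :
    ∃ ε : Finset (Fin d), E = ε.map Fin.castSuccEmb ∨
      E = insert (Fin.last d) (ε.map Fin.castSuccEmb) := by
  refine ⟨lowSet d E, ?_⟩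
  rw [map_castSuccEmb_lowSet]
  by_cases h : Fin.last d ∈ E
  · exact Or.inr (insert_erase h).symm
  · exact Or.inl (erase_eq_of_notMem h).symm

section pointXY

variable {X : Type*} {d : ℕ} {x y : X}

@[simp]
lemma pointXY_empty (a : Finset (Fin d) → X) : pointXY d x y a ∅ = x := by
  simp [pointXY]

@[simp]
lemma pointXY_singleton_last (a : Finset (Fin d) → X) : pointXY d x y a {Fin.last d} = y := by
  simp [pointXY]

@[simp]
lemma pointXY_map_castSuccEmb (a : Finset (Fin d) → X) (ε : Finset (Fin d)) :
    pointXY d x y a (ε.map Fin.castSuccEmb) = if ε = ∅ then x else a ε := by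
  simp [pointXY, lowSet_map_castSuccEmb]

@[simp]
lemma pointXY_insert_last_map_castSuccEmb (a : Finset (Fin d) → X) (ε : Finset (Fin d)) :
    pointXY d x y a (insert (Fin.last d) (ε.map Fin.castSuccEmb)) = if ε = ∅ then y else a ε := by
  rcases ε.eq_empty_or_nonempty with rfl | ⟨i, hi⟩
  · simp [pointXY]
  have hne : insert (Fin.last d) (ε.map Fin.castSuccEmb) ≠ {Fin.last d} := fun h => by
    have : i.castSucc ∈ insert (Fin.last d) (ε.map Fin.castSuccEmb) := by simp [hi]
    simp [h, Fin.castSucc_ne_last] at this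
  simp [pointXY, hne, ne_empty_of_mem hi, lowSet_insert_last_map_castSuccEmb]

/-- The point `(x, q_*, y, q_*)`, where `q_*` is read off the lower face of `q`. -/
noncomputable def pointXYOf (d : ℕ) (x y : X) (q : Finset (Fin (d + 1)) → X) :
    Finset (Fin (d + 1)) → X :=
  pointXY d x y fun ε => q (ε.map Fin.castSuccEmb)

lemma pointXYOf_pointXY (a : Finset (Fin d) → X) :
    pointXYOf d x y (pointXY d x y a) = pointXY d x y a := by
  funext E
  obtain ⟨ε, rfl | rfl⟩ := exists_eq_map_castSuccEmb_or_eq_insert_last d E <;>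
    by_cases hε : ε = ∅ <;>
    simp [pointXYOf, hε]

lemma exists_pointXY_mem_iff (s : Set (Finset (Fin (d + 1)) → X)) :
    (∃ a, pointXY d x y a ∈ s) ↔ ∃ q ∈ s, pointXYOf d x y q = q := by
  constructor
  · rintro ⟨a, ha⟩
    exact ⟨_, ha, pointXYOf_pointXY a⟩
  · rintro ⟨q, hq, hfix⟩
    exact ⟨_, (hfix ▸ hq :)⟩

variable [PseudoMetricSpace X]

lemma lipschitzWith_one_pointXYOf : LipschitzWith 1 (pointXYOf d x y) := by
  refine LipschitzWith.of_dist_le_mul fun q q' => ?_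
  rw [NNReal.coe_one, one_mul, dist_pi_le_iff dist_nonneg]
  intro E
  obtain ⟨ε, rfl | rfl⟩ := exists_eq_map_castSuccEmb_or_eq_insert_last d E <;>
    by_cases hε : ε = ∅ <;>
    simp [pointXYOf, hε, dist_le_pi_dist]

lemma dist_pointXYOf_lt_iff (q : Finset (Fin (d + 1)) → X) {δ : ℝ} (hδ : 0 < δ) :
    dist (pointXYOf d x y q) q < δ ↔
      dist x (q ∅) < δ ∧ dist y (q {Fin.last d}) < δ ∧
        ∀ ε : Finset (Fin d), ε.Nonempty →
          dist (q (ε.map Fin.castSuccEmb)) (q (insert (Fin.last d) (ε.map Fin.castSuccEmb))) < δ := by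
  rw [dist_pi_lt_iff hδ]
  constructor
  · intro h
    refine ⟨by simpa [pointXYOf] using h ∅, by simpa [pointXYOf] using h {Fin.last d},
      fun ε hε => ?_⟩
    simpa [pointXYOf, hε.ne_empty] using
      h (insert (Fin.last d) (ε.map Fin.castSuccEmb))
  · rintro ⟨hx, hy, hε⟩ E
    obtain ⟨ε, rfl | rfl⟩ := exists_eq_map_castSuccEmb_or_eq_insert_last d E <;>
      rcases ε.eq_empty_or_nonempty with rfl | hne
    · simpa [pointXYOf] using hx
    · simp [pointXYOf, hne.ne_empty, hδ]
    · simpa [pointXYOf] using hy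
    · simpa [pointXYOf, hne.ne_empty] using hε ε hne

end pointXY

lemma IsCompact.exists_eq_of_forall_exists_dist_lt {α β : Type*} [TopologicalSpace α]
    [MetricSpace β] {K : Set α} (hK : IsCompact K) {f g : α → β} (hf : Continuous f)
    (hg : Continuous g) (h : ∀ δ > 0, ∃ q ∈ K, dist (f q) (g q) < δ) :
    ∃ q ∈ K, f q = g q := by
  obtain ⟨q₀, hq₀, -⟩ := h 1 one_pos
  obtain ⟨q, hqK, hmin⟩ := hK.exists_isMinOn ⟨q₀, hq₀⟩ (hf.dist hg).continuousOn
  refine ⟨q, hqK, by_contra fun hne => ?_⟩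
  obtain ⟨q', hq'K, hlt⟩ := h _ (dist_pos.mpr hne)
  exact (hmin hq'K).not_gt hlt

lemma LipschitzWith.exists_mem_dist_lt_of_mem_closure {α : Type*} [PseudoMetricSpace α]
    {g : α → α} (hg : LipschitzWith 1 g) {S : Set α} {q : α} (hq : q ∈ closure S)
    (hfix : g q = q) {δ : ℝ} (hδ : 0 < δ) : ∃ p ∈ S, dist (g p) p < δ := by
  obtain ⟨p, hpS, hqp⟩ := Metric.mem_closure_iff.mp hq (δ / 2) (half_pos hδ)
  refine ⟨p, hpS, ?_⟩
  calc dist (g p) p ≤ dist (g p) (g q) + dist q p := by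
        simpa only [hfix] using dist_triangle (g p) (g q) p
    _ ≤ dist p q + dist q p := by
        gcongr
        simpa using hg.dist_le_mul p q
    _ < δ := by rw [dist_comm p q]; linarith

lemma exists_forall_dist_smul_smul_lt {T X ι : Type*} [SMul T X] [PseudoMetricSpace X]
    [Fintype ι] (hc : ∀ t : T, Continuous fun x : X => t • x) {x y : X}
    (hy : y ∈ closure {z : X | ∃ t : T, z = t • x}) (u : ι → T) {δ : ℝ} (hδ : 0 < δ) :
    ∃ s : T, ∀ i, dist (u i • s • x) (u i • y) < δ := by
  have hF : Continuous fun w : X => fun i => u i • w := continuous_pi fun i => hc (u i)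
  obtain ⟨_, hw, s, rfl⟩ := mem_closure_iff_nhds.mp hy _
    (hF.continuousAt.preimage_mem_nhds (Metric.ball_mem_nhds _ hδ))
  exact ⟨s, (dist_pi_lt_iff hδ).mp hw⟩

section faceCubes

variable {T X : Type*} [CommGroup T] [MulAction T X]

def faceCubes (T X : Type*) [CommGroup T] [MulAction T X] (d : ℕ) :
    Set (Finset (Fin d) → X) :=
  {y | ∃ (x : X) (t : Fin d → T), y = faceAct d t fun _ => x}

lemma faceAct_const_map_castSuccEmb {d : ℕ} (t : Fin (d + 1) → T) (z : X) (ε : Finset (Fin d)) :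
    faceAct (d + 1) t (fun _ => z) (ε.map Fin.castSuccEmb) = (∏ i ∈ ε, Fin.init t i) • z := by
  rw [faceAct, prod_map]
  rfl

lemma faceAct_const_insert_last_map_castSuccEmb {d : ℕ} (t : Fin (d + 1) → T) (z : X)
    (ε : Finset (Fin d)) :
    faceAct (d + 1) t (fun _ => z) (insert (Fin.last d) (ε.map Fin.castSuccEmb)) =
      (∏ i ∈ ε, Fin.init t i) • t (Fin.last d) • z := by
  rw [faceAct, prod_insert (Fin.last_notMem_map_castSuccEmb d ε), prod_map, mul_comm, mul_smul]
  rfl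

variable [PseudoMetricSpace X] {d : ℕ} {x y : X}

lemma dist_pointXYOf_faceAct_lt_iff (t : Fin (d + 1) → T) (z : X) {δ : ℝ} (hδ : 0 < δ) :
    dist (pointXYOf d x y (faceAct (d + 1) t fun _ => z)) (faceAct (d + 1) t fun _ => z) < δ ↔
      dist x z < δ ∧ dist y (t (Fin.last d) • z) < δ ∧
        ∀ ε : Finset (Fin d), ε.Nonempty →
          dist ((∏ i ∈ ε, Fin.init t i) • z) ((∏ i ∈ ε, Fin.init t i) • t (Fin.last d) • z) < δ := by
  rw [dist_pointXYOf_lt_iff _ hδ]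
  simp only [faceAct_const_map_castSuccEmb, faceAct_const_insert_last_map_castSuccEmb]
  simp [faceAct]

end faceCubes

lemma rp_iff_forall_exists_faceCubes_dist_pointXYOf_lt {T X : Type*} [CommGroup T]
    [MulAction T X] [MetricSpace X] {d : ℕ} {x y : X}
    (hc : ∀ t : T, Continuous fun x : X => t • x)
    (hmin : ∀ x : X, closure {z : X | ∃ t : T, z = t • x} = Set.univ) :
    RP T d x y ↔ ∀ δ > 0, ∃ p ∈ faceCubes T X (d + 1), dist (pointXYOf d x y p) p < δ := by
  constructor
  · intro h δ hδ
    obtain ⟨x', y', t, hx, hy, ht⟩ := h (δ / 2) (half_pos hδ)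
    -- minimality: replace `y'` by some `s • x'` so close that no translate `t_ε y'` moves much
    obtain ⟨s, hs⟩ := exists_forall_dist_smul_smul_lt hc (hmin x' ▸ Set.mem_univ y')
      (fun ε : Finset (Fin d) => ∏ i ∈ ε, t i) (half_pos hδ)
    refine ⟨_, ⟨x', Fin.snoc t s, rfl⟩,
      (dist_pointXYOf_faceAct_lt_iff _ _ hδ).mpr ⟨by linarith, ?_, fun ε hε => ?_⟩⟩
    · have hs₀ : dist (s • x') y' < δ / 2 := by simpa using hs ∅
      rw [Fin.snoc_last]
      calc dist y (s • x') ≤ dist y y' + dist (s • x') y' := by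
            simpa only [dist_comm y'] using dist_triangle y y' (s • x')
        _ < δ := by linarith
    · simp only [Fin.init_snoc, Fin.snoc_last]
      calc _ ≤ dist ((∏ i ∈ ε, t i) • x') ((∏ i ∈ ε, t i) • y')
            + dist ((∏ i ∈ ε, t i) • s • x') ((∏ i ∈ ε, t i) • y') := by
            rw [dist_comm ((∏ i ∈ ε, t i) • s • x')]
            exact dist_triangle _ _ _
        _ < δ := by linarith [ht ε hε, hs ε]
  · intro h δ hδ
    obtain ⟨_, ⟨z, t, rfl⟩, hlt⟩ := h δ hδ
    obtain ⟨hx, hy, hε⟩ := (dist_pointXYOf_faceAct_lt_iff t z hδ).mp hlt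
    exact ⟨z, t (Fin.last d) • z, Fin.init t, hx, hy, hε⟩

theorem stmt15_general {T X : Type*} [CommGroup T] [MetricSpace X] [CompactSpace X]
    [MulAction T X] (hc : ∀ t : T, Continuous fun x : X => t • x)
    (hmin : ∀ x : X, closure {z : X | ∃ t : T, z = t • x} = Set.univ)
    (d : ℕ) (x y : X) :
    RP T d x y ↔
      ∃ a : Finset (Fin d) → X, pointXY d x y a ∈ Qcube T X (d + 1) := by
  have hQ : IsCompact (Qcube T X (d + 1)) := isClosed_closure.isCompact
  rw [rp_iff_forall_exists_faceCubes_dist_pointXYOf_lt hc hmin, exists_pointXY_mem_iff]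
  constructor
  · intro h
    refine hQ.exists_eq_of_forall_exists_dist_lt lipschitzWith_one_pointXYOf.continuous
      continuous_id fun δ hδ => ?_
    obtain ⟨p, hp, hlt⟩ := h δ hδ
    exact ⟨p, subset_closure hp, hlt⟩
  · rintro ⟨q, hq, hfix⟩ δ hδ
    exact lipschitzWith_one_pointXYOf.exists_mem_dist_lt_of_mem_closure hq hfix hδ

/-- Host–Kra–Maass criterion: `(x,y) ∈ RP^{[d]}` iff there is `a_* ∈ X_*^{[d]}` with
`(x, a_*, y, a_*) ∈ Q^{[d+1]}`. -/
theorem stmt15 {T X : Type*} [CommGroup T] [MetricSpace X] [CompactSpace X]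
    [MulAction T X] (hc : ∀ t : T, Continuous fun x : X => t • x)
    (hmin : ∀ x : X, closure {z : X | ∃ t : T, z = t • x} = Set.univ)
    (d : ℕ) (hd : 1 ≤ d) (x y : X) :
    RP T d x y ↔
      ∃ a : Finset (Fin d) → X, pointXY d x y a ∈ Qcube T X (d + 1) :=
  stmt15_general hc hmin d x y
end
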